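/- Let Φ be a differentiable function on an open neighborhood of Δ in ℝ^{M+1}, and define Ψ_Φ : (0,∞)^M → ℝ as the perspective transform Ψ_Φ(ρ) := (1 + ρ_1 + ⋯ + ρ_M) · Φ( (1, ρ_1, …, ρ_M)/(1 + ρ_1 + ⋯ + ρ_M) ). Then the Ψ_Φ-induced scoring rule satisfies, for every η ∈ Δ°: λ^{Ψ_Φ}(η) = ( ⟨η, ∇Φ(η)⟩ − Φ(η) )·𝟙 − ∇Φ(η), where 𝟙 = (1, 1, …, 1) ∈ ℝ^{M+1}; that is, λ^{Ψ_Φ}_z(η) = ⟨η, ∇Φ(η)⟩ − Φ(η) − ∂Φ/∂η_z(η) for each z = 0, 1, …, M. -/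

import Mathlib

open scoped BigOperators

/-- The interior of the standard probability simplex in `ℝ^{M+1}`. -/
def posSimplex (M : ℕ) : Set (Fin (M + 1) → ℝ) :=
  {η | (∀ i, 0 < η i) ∧ ∑ i, η i = 1}

/-- `ρ(η) = (η_1/η_0, …, η_M/η_0)`. -/
noncomputable def rhoOf (M : ℕ) (η : Fin (M + 1) → ℝ) : Fin M → ℝ :=
  fun z => η z.succ / η 0

/-- `η(ρ) = (1, ρ_1, …, ρ_M)/(1 + ρ_1 + ⋯ + ρ_M)`. -/
noncomputable def etaOfRho (M : ℕ) (ρ : Fin M → ℝ) : Fin (M + 1) → ℝ :=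
  fun i => Fin.cons (α := fun _ => ℝ) (1 : ℝ) ρ i / (1 + ∑ j, ρ j)

/-- The `Ψ`-induced scoring rule: `λ^Ψ_0(η) = ⟨ρ, ∇Ψ(ρ)⟩ − Ψ(ρ)` and
`λ^Ψ_z(η) = −(∇Ψ(ρ))_z` for `z = 1, …, M`, where `ρ = ρ(η)`. -/
noncomputable def inducedRule (M : ℕ) (Ψ : (Fin M → ℝ) → ℝ)
    (η : Fin (M + 1) → ℝ) : Fin (M + 1) → ℝ :=
  Fin.cons
    ((∑ z, rhoOf M η z * fderiv ℝ Ψ (rhoOf M η) (Pi.single z 1)) - Ψ (rhoOf M η))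
    (fun z => - fderiv ℝ Ψ (rhoOf M η) (Pi.single z 1))

/-! The perspective `P(x) = (∑ x) Φ(x / ∑ x)` is positively homogeneous of degree one and
`Ψ_Φ(ρ) = P(1, ρ)`. So `∂Ψ_Φ/∂ρ_z = ∂P/∂x_{z+1}`, and Euler's relation `⟨x, ∇P(x)⟩ = P(x)` at
`x = (1, ρ)` turns `⟨ρ, ∇Ψ_Φ⟩ − Ψ_Φ` into `−∂P/∂x_0`: the induced rule is `−∇P(1, ρ)`.
Differentiating the perspective gives `∇P(x) = (Φ(η) − ⟨η, ∇Φ(η)⟩) 𝟙 + ∇Φ(η)` with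
`η = x / ∑ x`, and `(1, ρ(η))` normalises back to `η`. -/

lemma ContinuousLinearMap.apply_eq_sum_mul_single {ι R : Type*} [Fintype ι] [DecidableEq ι]
    [Semiring R] [TopologicalSpace R] (D : (ι → R) →L[R] R) (x : ι → R) :
    D x = ∑ i, x i * D (Pi.single i 1) := by
  conv_lhs => rw [pi_eq_sum_univ' x, map_sum]
  simp only [map_smul, smul_eq_mul]

lemma Fin.cons_zero_single_eq_single_succ {n : ℕ} {α : Type*} [Zero α] (w : Fin n) (a : α) :
    (Fin.cons 0 (Pi.single w a) : Fin (n + 1) → α) = Pi.single w.succ a := by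
  ext i
  cases i using Fin.cases <;> simp [Pi.single_apply]

lemma fderiv_comp_cons_one_single {𝕜 F : Type*} [NontriviallyNormedField 𝕜]
    [NormedAddCommGroup F] [NormedSpace 𝕜 F] {n : ℕ} {P : (Fin (n + 1) → 𝕜) → F}
    {ρ : Fin n → 𝕜} (hP : DifferentiableAt 𝕜 P (Fin.cons 1 ρ)) (w : Fin n) :
    fderiv 𝕜 (fun ρ => P (Fin.cons 1 ρ)) ρ (Pi.single w 1)
      = fderiv 𝕜 P (Fin.cons 1 ρ) (Pi.single w.succ 1) := by
  have hcons : HasFDerivAt (fun ρ : Fin n → 𝕜 => (Fin.cons 1 ρ : Fin (n + 1) → 𝕜))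
      ((0 : (Fin n → 𝕜) →L[𝕜] 𝕜).finCons (ContinuousLinearMap.id 𝕜 _)) ρ :=
    (hasFDerivAt_const 1 ρ).finCons (hasFDerivAt_id ρ)
  have hcomp : HasFDerivAt (fun ρ => P (Fin.cons 1 ρ)) _ ρ := hP.hasFDerivAt.comp ρ hcons
  rw [hcomp.fderiv]
  simp only [ContinuousLinearMap.comp_apply]
  congr 1
  exact Fin.cons_zero_single_eq_single_succ w 1

lemma inducedRule_comp_cons_one {M : ℕ} {P : (Fin (M + 1) → ℝ) → ℝ} {η : Fin (M + 1) → ℝ}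
    (hP : DifferentiableAt ℝ P (Fin.cons 1 (rhoOf M η)))
    (hEuler : fderiv ℝ P (Fin.cons 1 (rhoOf M η)) (Fin.cons 1 (rhoOf M η))
      = P (Fin.cons 1 (rhoOf M η))) (z : Fin (M + 1)) :
    inducedRule M (fun ρ => P (Fin.cons 1 ρ)) η z
      = -fderiv ℝ P (Fin.cons 1 (rhoOf M η)) (Pi.single z 1) := by
  cases z using Fin.cases with
  | zero =>
    have hsum := ContinuousLinearMap.apply_eq_sum_mul_single
      (fderiv ℝ P (Fin.cons 1 (rhoOf M η))) (Fin.cons 1 (rhoOf M η))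
    rw [hEuler, Fin.sum_univ_succ] at hsum
    simp [inducedRule, fderiv_comp_cons_one_single hP, hsum]
  | succ w => simp [inducedRule, fderiv_comp_cons_one_single hP]

noncomputable def perspective {ι : Type*} [Fintype ι] (Φ : (ι → ℝ) → ℝ) (x : ι → ℝ) : ℝ :=
  (∑ i, x i) * Φ ((∑ i, x i)⁻¹ • x)

lemma hasFDerivAt_perspective {ι : Type*} [Fintype ι] {Φ : (ι → ℝ) → ℝ} {x : ι → ℝ}
    (hx : ∑ i, x i ≠ 0) (hΦ : DifferentiableAt ℝ Φ ((∑ i, x i)⁻¹ • x)) :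
    HasFDerivAt (perspective Φ)
      ((Φ ((∑ i, x i)⁻¹ • x) - fderiv ℝ Φ ((∑ i, x i)⁻¹ • x) ((∑ i, x i)⁻¹ • x))
          • ∑ i, ContinuousLinearMap.proj (R := ℝ) i
        + fderiv ℝ Φ ((∑ i, x i)⁻¹ • x)) x := by
  have hS : HasFDerivAt (fun x : ι → ℝ => ∑ i, x i) (∑ i, ContinuousLinearMap.proj (R := ℝ) i) x :=
    HasFDerivAt.fun_sum fun i _ => hasFDerivAt_apply i x
  have hη : HasFDerivAt (fun y : ι → ℝ => (∑ i, y i)⁻¹ • y) _ x :=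
    ((hasFDerivAt_inv hx).comp x hS).smul (hasFDerivAt_id x)
  have hP : HasFDerivAt (perspective Φ) _ x :=
    hS.mul (hΦ.hasFDerivAt.comp (f := fun y : ι → ℝ => (∑ i, y i)⁻¹ • y) x hη)
  refine hP.congr_fderiv (ContinuousLinearMap.ext fun v => ?_)
  simp only [add_apply, smul_apply, ContinuousLinearMap.comp_apply,
    ContinuousLinearMap.smulRight_apply, ContinuousLinearMap.id_apply,
    ContinuousLinearMap.toSpanSingleton_apply, Function.comp_apply,
    map_add, map_smul, smul_eq_mul]
  field_simp
  ring

lemma fderiv_perspective_self {ι : Type*} [Fintype ι] {Φ : (ι → ℝ) → ℝ} {x : ι → ℝ}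
    (hx : ∑ i, x i ≠ 0) (hΦ : DifferentiableAt ℝ Φ ((∑ i, x i)⁻¹ • x)) :
    fderiv ℝ (perspective Φ) x x = perspective Φ x := by
  rw [(hasFDerivAt_perspective hx hΦ).fderiv]
  simp only [add_apply, smul_apply, _root_.sum_apply, ContinuousLinearMap.proj_apply, map_smul,
    smul_eq_mul, perspective]
  field_simp
  ring

lemma perspective_cons_one {M : ℕ} (Φ : (Fin (M + 1) → ℝ) → ℝ) (ρ : Fin M → ℝ) :
    (1 + ∑ j, ρ j) * Φ (etaOfRho M ρ) = perspective Φ (Fin.cons 1 ρ) := by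
  have hη : etaOfRho M ρ = (1 + ∑ j, ρ j)⁻¹ • (Fin.cons 1 ρ : Fin (M + 1) → ℝ) := by
    ext i
    simp [etaOfRho, div_eq_inv_mul]
  rw [perspective, Fin.sum_cons, hη]

lemma cons_one_rhoOf {M : ℕ} {η : Fin (M + 1) → ℝ} (h0 : η 0 ≠ 0) :
    (Fin.cons 1 (rhoOf M η) : Fin (M + 1) → ℝ) = (η 0)⁻¹ • η := by
  ext i
  cases i using Fin.cases <;> simp [rhoOf, h0, div_eq_inv_mul]

theorem inducedRule_perspective_eq_general
    (M : ℕ)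
    (Φ : (Fin (M + 1) → ℝ) → ℝ)
    (U : Set (Fin (M + 1) → ℝ))
    (hΔU : stdSimplex ℝ (Fin (M + 1)) ⊆ U)
    (hΦ : ∀ η ∈ U, DifferentiableAt ℝ Φ η) :
    ∀ η ∈ posSimplex M, ∀ z : Fin (M + 1),
      inducedRule M (fun ρ => (1 + ∑ j, ρ j) * Φ (etaOfRho M ρ)) η z
        = (∑ j, η j * fderiv ℝ Φ η (Pi.single j 1)) - Φ η
          - fderiv ℝ Φ η (Pi.single z 1) := by
  rintro η ⟨hpos, hη_sum⟩ z
  have h0 : η 0 ≠ 0 := (hpos 0).ne'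
  set x : Fin (M + 1) → ℝ := Fin.cons 1 (rhoOf M η) with hx
  have hx_sum : ∑ i, x i = (η 0)⁻¹ := by
    simp only [hx, cons_one_rhoOf h0, Pi.smul_apply, smul_eq_mul, ← Finset.mul_sum, hη_sum, mul_one]
  have hx_ne : ∑ i, x i ≠ 0 := hx_sum ▸ inv_ne_zero h0
  have hx_norm : (∑ i, x i)⁻¹ • x = η := by
    rw [hx_sum, hx, cons_one_rhoOf h0, inv_inv, smul_smul, mul_inv_cancel₀ h0, one_smul]
  have hΦη : DifferentiableAt ℝ Φ ((∑ i, x i)⁻¹ • x) :=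
    hx_norm ▸ hΦ η (hΔU ⟨fun i => (hpos i).le, hη_sum⟩)
  have hP := hasFDerivAt_perspective hx_ne hΦη
  simp_rw [perspective_cons_one]
  rw [inducedRule_comp_cons_one hP.differentiableAt (fderiv_perspective_self hx_ne hΦη), hP.fderiv,
    hx_norm]
  simp [ContinuousLinearMap.apply_eq_sum_mul_single _ η]
  ring

/-- for `Φ` differentiable on an open neighborhood of the simplex and the
perspective transform `Ψ_Φ(ρ) = (1 + ∑ρ)·Φ(η(ρ))`, the `Ψ_Φ`-induced scoring rule satisfies
`λ^{Ψ_Φ}_z(η) = ⟨η, ∇Φ(η)⟩ − Φ(η) − ∂Φ/∂η_z(η)` for all `η ∈ Δ°` and all `z`. -/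
theorem inducedRule_perspective_eq
    (M : ℕ) (hM : 1 ≤ M)
    (Φ : (Fin (M + 1) → ℝ) → ℝ)
    (U : Set (Fin (M + 1) → ℝ)) (hU : IsOpen U)
    (hΔU : stdSimplex ℝ (Fin (M + 1)) ⊆ U)
    (hΦ : ∀ η ∈ U, DifferentiableAt ℝ Φ η) :
    ∀ η ∈ posSimplex M, ∀ z : Fin (M + 1),
      inducedRule M (fun ρ => (1 + ∑ j, ρ j) * Φ (etaOfRho M ρ)) η z
        = (∑ j, η j * fderiv ℝ Φ η (Pi.single j 1)) - Φ η
          - fderiv ℝ Φ η (Pi.single z 1) :=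
  inducedRule_perspective_eq_general M Φ U hΔU hΦ
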